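/- Let G be a finite commutative group, let p be a prime dividing the cardinality of G, and let B be a natural number with B ≤ p. Then p · |{g ∈ G : orderOf(g) < B}| ≤ |G|. In particular, a uniformly random element g of G satisfies orderOf(g) ≥ B with probability at least 1 − 1/p. -/

import Mathlib

/-!
Cauchy's theorem gives a subgroup `H ≤ G` of order `p`. In an abelian group the elements whose
order is prime to `p` are closed under `a⁻¹ * b`, and the only such element of `H` is `1`, so
distinct elements of order prime to `p` lie in distinct cosets of `H`. Hence there are at most
`|G| / p` of them, and every element of order `< B ≤ p` is one of them.
-/

theorem Subgroup.eq_one_of_mem_of_card_eq_prime {G : Type*} [Group G] {H : Subgroup G}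
    {p : ℕ} (hp : p.Prime) (hH : Nat.card H = p) {g : G} (hg : g ∈ H)
    (hpg : ¬ p ∣ orderOf g) : g = 1 := by
  have hgp : orderOf g ∣ p := hH ▸ H.orderOf_dvd_natCard hg
  rcases (Nat.dvd_prime hp).mp hgp with h | h
  · exact orderOf_eq_one_iff.mp h
  · exact absurd (dvd_of_eq h.symm) hpg

theorem not_prime_dvd_orderOf_inv_mul {G : Type*} [CommGroup G] {p : ℕ} (hp : p.Prime)
    {a b : G} (ha : ¬ p ∣ orderOf a) (hb : ¬ p ∣ orderOf b) :
    ¬ p ∣ orderOf (a⁻¹ * b) := by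
  intro h
  have hab : p ∣ orderOf a * orderOf b := by
    simpa only [orderOf_inv] using h.trans (Commute.all a⁻¹ b).orderOf_mul_dvd_mul_orderOf
  exact (hp.dvd_mul.mp hab).elim ha hb

theorem prime_mul_card_not_dvd_orderOf_le {G : Type*} [CommGroup G] [Finite G] {p : ℕ}
    (hp : p.Prime) (hdvd : p ∣ Nat.card G) :
    p * Nat.card {g : G // ¬ p ∣ orderOf g} ≤ Nat.card G := by
  have : Fact p.Prime := ⟨hp⟩
  obtain ⟨H, hH⟩ := Sylow.exists_subgroup_card_pow_prime (G := G) p (n := 1) (by rwa [pow_one])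
  rw [pow_one] at hH
  have hinj : Function.Injective fun g : {g : G // ¬ p ∣ orderOf g} => (g : G ⧸ H) := by
    rintro ⟨a, ha⟩ ⟨b, hb⟩ hab
    have hmem : a⁻¹ * b ∈ H := QuotientGroup.eq.mp hab
    have h1 := H.eq_one_of_mem_of_card_eq_prime hp hH hmem (not_prime_dvd_orderOf_inv_mul hp ha hb)
    exact Subtype.ext (inv_mul_eq_one.mp h1)
  calc p * Nat.card {g : G // ¬ p ∣ orderOf g}
      ≤ Nat.card H * H.index := by
        rw [hH, Subgroup.index]; exact Nat.mul_le_mul_left p (Nat.card_le_card_of_injective _ hinj)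
    _ = Nat.card G := H.card_mul_index

theorem one_sub_inv_le_card_compl_div {α : Type*} [Finite α] [Nonempty α] (P : α → Prop)
    {p : ℕ} (hp : 0 < p) (h : p * Nat.card {a // P a} ≤ Nat.card α) :
    1 - 1 / (p : ℝ) ≤ (Nat.card {a // ¬ P a} : ℝ) / Nat.card α := by
  have := Fintype.ofFinite α
  classical
  have hcompl : (Nat.card {a // ¬ P a} : ℝ) = Nat.card α - Nat.card {a // P a} := by
    simp only [Nat.card_eq_fintype_card, Fintype.card_subtype_compl]
    rw [Nat.cast_sub (Fintype.card_subtype_le P)]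
  have hα : (0 : ℝ) < Nat.card α := by exact_mod_cast Nat.card_pos
  have hp' : (0 : ℝ) < p := by exact_mod_cast hp
  have h' : (p : ℝ) * Nat.card {a // P a} ≤ Nat.card α := by exact_mod_cast h
  rw [hcompl, le_div_iff₀ hα, sub_mul, one_mul, one_div, inv_mul_eq_div, sub_le_sub_iff_left,
    le_div_iff₀' hp']
  exact h'

/-- In a finite commutative group `G`, if `p` is a prime dividing `|G|` and `B ≤ p`,
then `p · |{g : orderOf g < B}| ≤ |G|`; equivalently, a uniformly random element has
order at least `B` with probability at least `1 − 1/p`. -/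
theorem low_order_elements_sparse {G : Type*} [CommGroup G] [Finite G]
    (p : ℕ) (hp : p.Prime) (hdvd : p ∣ Nat.card G) (B : ℕ) (hB : B ≤ p) :
    p * Nat.card {g : G // orderOf g < B} ≤ Nat.card G ∧
      (1 - 1 / (p : ℝ)) ≤ (Nat.card {g : G // B ≤ orderOf g} : ℝ) / Nat.card G := by
  have hsub : ∀ g : G, orderOf g < B → ¬ p ∣ orderOf g := fun g hg hpg =>
    (Nat.le_of_dvd (orderOf_pos g) hpg).not_gt (hg.trans_le hB)
  have hcard : p * Nat.card {g : G // orderOf g < B} ≤ Nat.card G := calc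
    _ ≤ p * Nat.card {g : G // ¬ p ∣ orderOf g} :=
      Nat.mul_le_mul_left p (Nat.card_le_card_of_injective _ (Subtype.impEmbedding _ _ hsub).2)
    _ ≤ Nat.card G := prime_mul_card_not_dvd_orderOf_le hp hdvd
  refine ⟨hcard, ?_⟩
  have hcompl : Nat.card {g : G // B ≤ orderOf g} = Nat.card {g : G // ¬ orderOf g < B} :=
    Nat.card_congr (Equiv.subtypeEquivRight fun _ => not_lt.symm)
  rw [hcompl]
  exact one_sub_inv_le_card_compl_div _ hp.pos hcard
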